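/- There exists a primitive root g modulo 4231 such that the cosets X_i = g^i·H (0 ≤ i < 30, indices mod 30) of the subgroup H of 30th-power residues in 𝔽_4231^× form a 15-color Directed Ramsey algebra, i.e., with m = 15: (1) for all i, X_i + X_i = ⋃_{j ≠ i} X_j; (2) for all i, X_i + X_{i+15} = {0} ∪ ⋃_{j ∉ {i, i+15}} X_j; (3) for all i, j with i ≠ j and j ≠ i+15, X_i + X_j = 𝔽_4231 ∖ {0}. -/

import Mathlib

open Pointwise

/-- The set of nonzero `n`-th power residues in `𝔽_p = ZMod p`. -/
def Hpow (p n : ℕ) : Set (ZMod p) := {x | ∃ u : (ZMod p)ˣ, (u : ZMod p) ^ n = x}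

/-- The coset `X_i = g^i · H` of the subgroup of `n`-th power residues. -/
noncomputable def Xc (p n : ℕ) [Fact p.Prime] (g : ZMod p) (i : ℤ) : Set (ZMod p) :=
  g ^ i • Hpow p n

instance : Fact (Nat.Prime 4231) := ⟨by norm_num⟩

/-!
Write `X i = Xc 4231 30 3 i`; since `3` is a primitive root and `3 ^ 141 = 283`, the class of a
nonzero `z` is read off from `z ^ 141 = 283 ^ i`. Writing `x + y = x * (1 + y / x)`, a nonzero
`z ∈ X t` lies in `X i + X j` iff some `w ∈ X (j - i)` has `1 + w ∈ X (t - i)`, i.e. iff the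
cyclotomic number `(j - i, t - i)` of order 30 is positive; and `0 ∈ X i + X j` iff
`-1 ∈ X (j - i)`, i.e. iff `j - i ≡ 15`. The three axioms therefore say exactly that the vanishing
cyclotomic numbers are those of the pairs `(0, 0)`, `(15, 0)` and `(15, 15)`, which is a finite
computation: a witness for each of the other 897 pairs, and an exhaustive search for the three
exceptional ones.
-/

theorem IsPrimitiveRoot.zpow_eq_zpow_iff_intCast_eq {G : Type*} [CommGroupWithZero G] {ζ : G}
    {n : ℕ} (h : IsPrimitiveRoot ζ n) (hn : n ≠ 0) {i j : ℤ} :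
    ζ ^ i = ζ ^ j ↔ (i : ZMod n) = j := by
  have hζ : ζ ≠ 0 := h.ne_zero hn
  rw [← div_eq_one_iff_eq (zpow_ne_zero _ hζ), ← zpow_sub₀ hζ, h.zpow_eq_one_iff_dvd,
    ZMod.intCast_eq_intCast_iff_dvd_sub, dvd_sub_comm]

section CosetsOfPowerResidues

variable {p : ℕ} [Fact p.Prime] {n k : ℕ} {g : ZMod p}

theorem exists_pow_eq_of_ne_zero (hg : IsPrimitiveRoot g (p - 1)) {x : ZMod p} (hx : x ≠ 0) :
    ∃ t : ℕ, g ^ t = x := by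
  have : NeZero (p - 1) := ⟨(Fact.out : p.Prime).pred_pos.ne'⟩
  obtain ⟨t, -, ht⟩ := hg.eq_pow_of_pow_eq_one (ZMod.pow_card_sub_one_eq_one hx)
  exact ⟨t, ht⟩

theorem mem_Hpow_iff (hg : IsPrimitiveRoot g (p - 1)) (hnk : n * k = p - 1) {x : ZMod p} :
    x ∈ Hpow p n ↔ x ≠ 0 ∧ x ^ k = 1 := by
  have hp : p - 1 ≠ 0 := (Fact.out : p.Prime).pred_pos.ne'
  constructor
  · rintro ⟨u, rfl⟩
    exact ⟨pow_ne_zero _ u.ne_zero, by rw [← pow_mul, hnk, ZMod.pow_card_sub_one_eq_one u.ne_zero]⟩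
  · rintro ⟨hx, hxk⟩
    obtain ⟨t, rfl⟩ := exists_pow_eq_of_ne_zero hg hx
    have hdvd : n * k ∣ t * k := by rw [hnk, ← hg.pow_eq_one_iff_dvd, pow_mul, hxk]
    obtain ⟨s, rfl⟩ := Nat.dvd_of_mul_dvd_mul_right
      (Nat.pos_of_ne_zero (right_ne_zero_of_mul (hnk.trans_ne hp))) hdvd
    exact ⟨Units.mk0 (g ^ s) (pow_ne_zero _ (hg.ne_zero hp)), by simp [← pow_mul, mul_comm]⟩

theorem mem_Xc_iff (hg : IsPrimitiveRoot g (p - 1)) (hnk : n * k = p - 1) {i : ℤ} {z : ZMod p} :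
    z ∈ Xc p n g i ↔ z ≠ 0 ∧ z ^ k = (g ^ k) ^ i := by
  have hg0 : g ≠ 0 := hg.ne_zero ((Fact.out : p.Prime).pred_pos.ne')
  have hgi : g ^ i ≠ 0 := zpow_ne_zero _ hg0
  have hcomm : (g ^ i) ^ k = (g ^ k) ^ i := by
    rw [← zpow_natCast, ← zpow_natCast g, ← zpow_mul, ← zpow_mul, mul_comm]
  rw [Xc, Set.mem_smul_set_iff_inv_smul_mem₀ hgi, mem_Hpow_iff hg hnk, smul_eq_mul, mul_pow,
    inv_pow, hcomm, inv_mul_eq_one₀ (zpow_ne_zero _ (pow_ne_zero _ hg0)), eq_comm]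
  simp only [ne_eq, mul_eq_zero, inv_eq_zero, hgi, false_or]

theorem isPrimitiveRoot_pow_of_mul_eq (hg : IsPrimitiveRoot g (p - 1)) (hnk : n * k = p - 1) :
    IsPrimitiveRoot (g ^ k) n :=
  hg.pow (Nat.sub_pos_of_lt (Fact.out : p.Prime).one_lt) (by rw [← hnk, mul_comm])

theorem zero_notMem_Xc (hg : IsPrimitiveRoot g (p - 1)) (hnk : n * k = p - 1) (i : ℤ) :
    (0 : ZMod p) ∉ Xc p n g i :=
  fun h => ((mem_Xc_iff hg hnk).1 h).1 rfl

theorem exists_mem_Xc (hg : IsPrimitiveRoot g (p - 1)) (hnk : n * k = p - 1) {z : ZMod p}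
    (hz : z ≠ 0) : ∃ t : ℤ, z ∈ Xc p n g t := by
  obtain ⟨t, rfl⟩ := exists_pow_eq_of_ne_zero hg hz
  exact ⟨t, (mem_Xc_iff hg hnk).2 ⟨hz, by rw [zpow_natCast, ← pow_mul, ← pow_mul, mul_comm]⟩⟩

theorem mem_Xc_iff_of_mem (hg : IsPrimitiveRoot g (p - 1)) (hnk : n * k = p - 1) {t j : ℤ}
    {z : ZMod p} (hz : z ∈ Xc p n g t) : z ∈ Xc p n g j ↔ (j : ZMod n) = t := by
  have hn : n ≠ 0 :=
    left_ne_zero_of_mul (hnk.trans_ne ((Fact.out : p.Prime).pred_pos.ne'))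
  rw [mem_Xc_iff hg hnk] at hz ⊢
  rw [hz.2, (isPrimitiveRoot_pow_of_mul_eq hg hnk).zpow_eq_zpow_iff_intCast_eq hn, eq_comm]
  exact and_iff_right hz.1

theorem Xc_congr (hg : IsPrimitiveRoot g (p - 1)) (hnk : n * k = p - 1) {i j : ℤ}
    (h : (i : ZMod n) = j) : Xc p n g i = Xc p n g j := by
  have hn : n ≠ 0 :=
    left_ne_zero_of_mul (hnk.trans_ne ((Fact.out : p.Prime).pred_pos.ne'))
  ext z
  rw [mem_Xc_iff hg hnk, mem_Xc_iff hg hnk,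
    ((isPrimitiveRoot_pow_of_mul_eq hg hnk).zpow_eq_zpow_iff_intCast_eq hn).2 h]

theorem mem_biUnion_Xc_iff (hg : IsPrimitiveRoot g (p - 1)) (hnk : n * k = p - 1) {t : ℤ}
    {z : ZMod p} (hz : z ∈ Xc p n g t) (P : ZMod n → Prop) :
    z ∈ ⋃ j ∈ {j : ℤ | P j}, Xc p n g j ↔ P t := by
  simp only [Set.mem_iUnion, exists_prop, Set.mem_ofPred_eq, mem_Xc_iff_of_mem hg hnk hz]
  exact ⟨fun ⟨j, hj, hjt⟩ => hjt ▸ hj, fun h => ⟨t, h, rfl⟩⟩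

theorem mul_mem_Xc (hg : IsPrimitiveRoot g (p - 1)) (hnk : n * k = p - 1) {a b : ℤ}
    {x y : ZMod p} (hx : x ∈ Xc p n g a) (hy : y ∈ Xc p n g b) : x * y ∈ Xc p n g (a + b) := by
  rw [mem_Xc_iff hg hnk] at hx hy ⊢
  refine ⟨mul_ne_zero hx.1 hy.1, ?_⟩
  rw [mul_pow, hx.2, hy.2,
    zpow_add₀ (pow_ne_zero _ (hg.ne_zero ((Fact.out : p.Prime).pred_pos.ne')))]

theorem div_mem_Xc (hg : IsPrimitiveRoot g (p - 1)) (hnk : n * k = p - 1) {a b : ℤ}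
    {x y : ZMod p} (hx : x ∈ Xc p n g a) (hy : y ∈ Xc p n g b) : y / x ∈ Xc p n g (b - a) := by
  rw [mem_Xc_iff hg hnk] at hx hy ⊢
  refine ⟨div_ne_zero hy.1 hx.1, ?_⟩
  rw [div_pow, hx.2, hy.2,
    zpow_sub₀ (pow_ne_zero _ (hg.ne_zero ((Fact.out : p.Prime).pred_pos.ne')))]

theorem zpow_mem_Xc (i : ℤ) : g ^ i ∈ Xc p n g i := by
  have h1 : (1 : ZMod p) ∈ Hpow p n := ⟨1, by simp⟩
  rw [Xc]
  simpa using Set.smul_mem_smul_set (a := g ^ i) h1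

theorem mem_Xc_add_Xc_iff (hg : IsPrimitiveRoot g (p - 1)) (hnk : n * k = p - 1) {i j t : ℤ}
    {z : ZMod p} (hz : z ∈ Xc p n g t) :
    z ∈ Xc p n g i + Xc p n g j ↔ ∃ w ∈ Xc p n g (j - i), 1 + w ∈ Xc p n g (t - i) := by
  constructor
  · rintro ⟨x, hx, y, hy, rfl⟩
    have hx0 : x ≠ 0 := ((mem_Xc_iff hg hnk).1 hx).1
    refine ⟨y / x, div_mem_Xc hg hnk hx hy, ?_⟩
    rw [show 1 + y / x = (x + y) / x by field_simp]
    exact div_mem_Xc hg hnk hx hz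
  · rintro ⟨w, hw, hw1⟩
    have hw10 : 1 + w ≠ 0 := ((mem_Xc_iff hg hnk).1 hw1).1
    have hx := div_mem_Xc hg hnk hw1 hz
    rw [sub_sub_cancel] at hx
    have hy := mul_mem_Xc hg hnk hx hw
    rw [add_sub_cancel] at hy
    exact ⟨z / (1 + w), hx, z / (1 + w) * w, hy, by field_simp⟩

theorem neg_one_mem_Xc_iff (hg : IsPrimitiveRoot g (p - 1)) (hnk : n * k = p - 1) {m : ℕ}
    (hn : n = 2 * m) (hk : Odd k) {d : ℤ} : -1 ∈ Xc p n g d ↔ (d : ZMod n) = m := by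
  have hn0 : n ≠ 0 :=
    left_ne_zero_of_mul (hnk.trans_ne ((Fact.out : p.Prime).pred_pos.ne'))
  have hζ := isPrimitiveRoot_pow_of_mul_eq hg hnk
  have hm : (g ^ k) ^ m = -1 :=
    (hζ.pow (Nat.pos_of_ne_zero hn0) (by rw [hn, mul_comm])).eq_neg_one_of_two_right
  rw [mem_Xc_iff hg hnk, hk.neg_one_pow, and_iff_right (neg_ne_zero.2 one_ne_zero), ← hm,
    ← zpow_natCast, hζ.zpow_eq_zpow_iff_intCast_eq hn0, eq_comm, Int.cast_natCast]

theorem zero_mem_Xc_add_Xc_iff (hg : IsPrimitiveRoot g (p - 1)) (hnk : n * k = p - 1) {i j : ℤ} :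
    0 ∈ Xc p n g i + Xc p n g j ↔ -1 ∈ Xc p n g (j - i) := by
  constructor
  · rintro ⟨x, hx, y, hy, hxy⟩
    have hx0 : x ≠ 0 := ((mem_Xc_iff hg hnk).1 hx).1
    rw [← neg_div_self hx0, ← eq_neg_of_add_eq_zero_right hxy]
    exact div_mem_Xc hg hnk hx hy
  · intro h
    have hy := mul_mem_Xc hg hnk (zpow_mem_Xc i) h
    rw [add_sub_cancel] at hy
    exact ⟨g ^ i, zpow_mem_Xc i, g ^ i * -1, hy, by ring⟩

end CosetsOfPowerResidues

section Order30

local notation "X" => Xc 4231 30 (3 : ZMod 4231)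

theorem isPrimitiveRoot_three : IsPrimitiveRoot (3 : ZMod 4231) 4230 := by
  rw [IsPrimitiveRoot.iff_orderOf]
  refine orderOf_eq_of_pow_and_pow_div_prime (by norm_num)
    (ZMod.pow_card_sub_one_eq_one (p := 4231) (by decide)) fun q hq hdvd => ?_
  have hq' : q ∈ Nat.primeFactors 4230 := Nat.mem_primeFactors.mpr ⟨hq, hdvd, by norm_num⟩
  rw [show Nat.primeFactors 4230 = {2, 3, 5, 47} by
    simp [Nat.primeFactors, Nat.primeFactorsList_ofNat]] at hq'
  simp only [Finset.mem_insert, Finset.mem_singleton] at hq'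
  rcases hq' with rfl | rfl | rfl | rfl <;> decide +kernel

theorem thirty_mul_141 : 30 * 141 = 4231 - 1 := rfl

theorem mem_X_iff {i : ℤ} {z : ZMod 4231} : z ∈ X i ↔ z ≠ 0 ∧ z ^ 141 = 283 ^ i := by
  rw [mem_Xc_iff isPrimitiveRoot_three thirty_mul_141,
    show (3 : ZMod 4231) ^ 141 = 283 by decide +kernel]

abbrev IsExceptionalPair (d c : ZMod 30) : Prop := d = 0 ∧ c = 0 ∨ d = 15 ∧ (c = 0 ∨ c = 15)

/-- `x ∈ X d` and `x + 1 ∈ X c`, read off in `ℕ` from `x ^ 141 = 283 ^ d` and `283 = 3 ^ 141`. -/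
abbrev IsCyclotomicWitness (d c : ZMod 30) (x : ℕ) : Prop :=
  x ^ 141 % 4231 = 283 ^ d.val % 4231 ∧ (x + 1) ^ 141 % 4231 = 283 ^ c.val % 4231

-- Entry `(d, c)` is the least `x` with `IsCyclotomicWitness d c x`; exceptional entries are `0`.
def cyclotomicWitnessTable : List (List ℕ) := [
  [0, 1210, 2542, 868, 1545, 1842, 531, 306, 44, 113, 126, 3286, 1404, 144, 477,
   429, 1249, 107, 174, 90, 769, 1168, 1, 284, 1514, 2143, 554, 579, 827, 823],
  [991, 378, 499, 2084, 2190, 2072, 379, 3145, 1201, 2275, 321, 1480, 163, 2512, 3,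
   270, 316, 517, 1087, 1837, 311, 1977, 132, 2198, 522, 172, 339, 228, 439, 262],
  [1017, 516, 121, 460, 700, 209, 2458, 1349, 62, 845, 489, 73, 548, 254, 695,
   361, 500, 1137, 1372, 734, 963, 736, 1317, 502, 644, 933, 396, 479, 9, 122],
  [2100, 1932, 1111, 363, 1506, 884, 219, 1145, 364, 157, 366, 1919, 762, 388, 373,
   461, 1443, 422, 1321, 457, 27, 1378, 186, 148, 1467, 817, 409, 416, 2358, 467],
  [112, 227, 780, 472, 80, 444, 413, 50, 701, 691, 3391, 3071, 2069, 657, 265,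
   46, 70, 2969, 98, 1618, 81, 328, 238, 1744, 1003, 295, 941, 1766, 1739, 787],
  [1113, 1976, 1316, 26, 294, 293, 240, 2692, 510, 1132, 1189, 210, 623, 407, 778,
   1413, 2369, 464, 199, 795, 67, 984, 336, 807, 243, 2999, 138, 1332, 384, 445],
  [729, 3913, 8, 3985, 3201, 2655, 7, 859, 281, 201, 1218, 380, 882, 565, 109,
   1937, 1609, 78, 870, 220, 879, 352, 2043, 5, 17, 1339, 1381, 630, 401, 720],
  [2003, 924, 547, 2244, 327, 815, 307, 723, 21, 1532, 603, 334, 24, 1898, 359,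
   166, 1242, 1580, 1695, 724, 1890, 234, 94, 394, 542, 838, 223, 51, 15, 29],
  [3220, 310, 72, 365, 45, 509, 2580, 1202, 1270, 1236, 605, 2057, 22, 1788, 38,
   3500, 634, 1054, 277, 981, 1077, 282, 87, 757, 854, 921, 847, 1980, 610, 142],
  [740, 131, 459, 1533, 2285, 66, 2080, 1957, 86, 1487, 647, 698, 135, 202, 189,
   1237, 216, 3022, 114, 1820, 1527, 2548, 1198, 3376, 692, 831, 2516, 2631, 930, 158],
  [368, 850, 61, 1377, 127, 198, 400, 233, 556, 784, 250, 1025, 1325, 1345, 648,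
   2076, 350, 1357, 342, 1666, 31, 1278, 251, 230, 1471, 258, 896, 490, 274, 1816],
  [822, 1200, 208, 2051, 690, 335, 381, 93, 1777, 130, 1470, 182, 211, 74, 1465,
   862, 1964, 743, 183, 1944, 194, 1489, 533, 1701, 1668, 1104, 1393, 587, 1215, 2524],
  [1753, 1661, 754, 883, 49, 25, 1529, 23, 633, 85, 3303, 773, 545, 119, 582,
   911, 35, 56, 136, 64, 549, 872, 179, 164, 624, 1874, 974, 1405, 40, 1205],
  [75, 2473, 120, 147, 69, 1970, 1391, 541, 1328, 830, 232, 593, 389, 356, 1746,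
   572, 2735, 1052, 1553, 666, 105, 203, 2018, 706, 145, 636, 168, 3467, 13, 192],
  [266, 315, 360, 1071, 696, 3577, 4, 1531, 583, 646, 2119, 207, 39, 191, 190,
   674, 154, 649, 1949, 374, 110, 1410, 225, 504, 1068, 2414, 1706, 452, 2170, 176],
  [0, 912, 979, 362, 271, 806, 790, 602, 1462, 1102, 197, 688, 1305, 12, 206,
   0, 570, 1516, 638, 430, 117, 83, 1244, 621, 528, 298, 573, 419, 1763, 47],
  [305, 990, 488, 1918, 1370, 292, 351, 842, 71, 1255, 249, 4068, 2800, 571, 427,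
   11, 248, 591, 894, 36, 19, 317, 953, 618, 2033, 484, 2418, 813, 155, 1719],
  [43, 521, 465, 1187, 79, 346, 108, 1055, 876, 1851, 349, 915, 910, 592, 1678,
   651, 1289, 598, 951, 599, 662, 1517, 213, 3048, 3097, 628, 518, 1019, 33, 57],
  [125, 171, 1563, 761, 237, 137, 200, 595, 1076, 425, 392, 129, 278, 829, 175,
   1047, 952, 2507, 302, 512, 803, 115, 1986, 343, 1148, 184, 99, 448, 2731, 1060],
  [796, 431, 735, 387, 97, 711, 1151, 411, 37, 65, 1344, 1417, 221, 104, 709,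
   297, 483, 345, 2724, 1014, 960, 375, 857, 552, 1619, 725, 91, 4181, 3760, 667],
  [106, 377, 2727, 626, 111, 964, 955, 20, 433, 739, 273, 1449, 118, 68, 1907,
   82, 291, 32, 1109, 3786, 1124, 663, 2497, 550, 804, 1870, 195, 506, 312, 653],
  [283, 892, 799, 415, 204, 985, 1846, 333, 2168, 1299, 60, 2549, 84, 1169, 673,
   116, 526, 1273, 819, 96, 376, 353, 354, 318, 494, 1648, 1878, 585, 664, 246],
  [1403, 2, 733, 2676, 226, 239, 77, 2019, 152, 1128, 849, 1199, 55, 355, 2397,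
   612, 1085, 348, 323, 1578, 738, 95, 3027, 180, 999, 568, 1158, 133, 252, 88],
  [553, 403, 395, 456, 264, 149, 6, 165, 756, 215, 399, 181, 632, 231, 503,
   1826, 2588, 969, 301, 103, 505, 285, 998, 1730, 977, 642, 2453, 811, 561, 717],
  [1209, 2274, 932, 421, 1247, 242, 855, 722, 309, 1197, 685, 2034, 1004, 146, 575,
   418, 18, 875, 124, 959, 625, 1896, 1127, 523, 957, 3446, 529, 693, 1069, 1319],
  [173, 438, 643, 185, 1738, 463, 629, 1725, 946, 2079, 1587, 2348, 1607, 1634, 314,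
   569, 726, 520, 679, 296, 1123, 818, 54, 325, 1367, 1340, 776, 299, 934, 331],
  [476, 162, 1885, 1397, 169, 777, 1365, 2203, 975, 2006, 341, 92, 544, 1560, 224,
   196, 140, 100, 160, 410, 1574, 2639, 151, 716, 574, 454, 139, 397, 538, 256],
  [768, 1430, 480, 2264, 1765, 1081, 449, 814, 276, 134, 229, 586, 1406, 491, 1020,
   2226, 812, 1502, 1483, 1175, 486, 580, 1362, 300, 417, 1767, 453, 1556, 52, 1191],
  [1893, 3394, 253, 156, 900, 1673, 16, 14, 1804, 1195, 1359, 1216, 34, 665, 440,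
   687, 10, 1712, 760, 482, 3479, 59, 611, 402, 931, 53, 475, 275, 1194, 41],
  [89, 1676, 515, 1320, 1617, 614, 3557, 923, 668, 188, 30, 193, 48, 1446, 1425,
   654, 247, 42, 1075, 905, 1448, 177, 718, 102, 123, 745, 159, 2752, 58, 824]
]

def cyclotomicWitness (d c : ZMod 30) : ℕ := (cyclotomicWitnessTable.getD d.val []).getD c.val 0

theorem isCyclotomicWitness_cyclotomicWitness :
    ∀ d c : ZMod 30, ¬IsExceptionalPair d c → IsCyclotomicWitness d c (cyclotomicWitness d c) := by
  decide +kernel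

theorem not_isCyclotomicWitness :
    ∀ d c : ZMod 30, IsExceptionalPair d c → ∀ x < 4231, ¬IsCyclotomicWitness d c x := by
  have h : ∀ d c : ZMod 30, IsExceptionalPair d c →
      (List.range 4231).all fun x => ¬IsCyclotomicWitness d c x := by
    decide +kernel
  exact fun d c hdc x hx =>
    of_decide_eq_true (List.all_eq_true.1 (h d c hdc) x (List.mem_range.2 hx))

theorem natCast_mem_X_iff {e : ℤ} {y : ℕ} :
    (y : ZMod 4231) ∈ X e ↔ y ^ 141 % 4231 = 283 ^ (e : ZMod 30).val % 4231 := by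
  rw [Xc_congr isPrimitiveRoot_three thirty_mul_141
    (show (e : ZMod 30) = (((e : ZMod 30).val : ℕ) : ℤ) by simp), mem_X_iff, zpow_natCast,
    ← ZMod.natCast_eq_natCast_iff']
  push_cast
  refine and_iff_right_of_imp fun h h0 => ?_
  rw [h0, zero_pow (by norm_num)] at h
  exact pow_ne_zero _ (by decide) h.symm

theorem exists_mem_X_one_add_mem_X_iff (d c : ℤ) :
    (∃ w ∈ X d, 1 + w ∈ X c) ↔ ¬IsExceptionalPair d c := by
  have hsucc (x : ℕ) : (1 : ZMod 4231) + x = ((x + 1 : ℕ) : ZMod 4231) := by push_cast; ring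
  constructor
  · rintro ⟨w, hw, hw1⟩ hex
    obtain ⟨x, hx, rfl⟩ : ∃ x : ℕ, x < 4231 ∧ (x : ZMod 4231) = w :=
      ⟨w.val, w.val_lt, w.natCast_zmod_val⟩
    rw [hsucc] at hw1
    exact not_isCyclotomicWitness d c hex x hx ⟨natCast_mem_X_iff.1 hw, natCast_mem_X_iff.1 hw1⟩
  · intro h
    obtain ⟨h1, h2⟩ := isCyclotomicWitness_cyclotomicWitness d c h
    refine ⟨_, natCast_mem_X_iff.2 h1, ?_⟩
    rw [hsucc]
    exact natCast_mem_X_iff.2 h2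

theorem mem_X_add_X_iff {i j t : ℤ} {z : ZMod 4231} (hz : z ∈ X t) :
    z ∈ X i + X j ↔ ¬IsExceptionalPair (j - i : ℤ) (t - i : ℤ) :=
  (mem_Xc_add_Xc_iff isPrimitiveRoot_three thirty_mul_141 hz).trans
    (exists_mem_X_one_add_mem_X_iff _ _)

theorem zero_mem_X_add_X_iff {i j : ℤ} : 0 ∈ X i + X j ↔ ((j - i : ℤ) : ZMod 30) = 15 :=
  (zero_mem_Xc_add_Xc_iff isPrimitiveRoot_three thirty_mul_141).trans
    (neg_one_mem_Xc_iff isPrimitiveRoot_three thirty_mul_141 rfl ⟨70, rfl⟩)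

theorem isExceptionalPair_sub_iff (a b c : ZMod 30) :
    IsExceptionalPair (b - a) (c - a) ↔ b = a ∧ c = a ∨ b = a + 15 ∧ (c = a ∨ c = a + 15) := by
  simp only [IsExceptionalPair, sub_eq_iff_eq_add', add_zero]

theorem X_add_X_self (i : ℤ) :
    X i + X i = ⋃ j ∈ {j : ℤ | (j : ZMod 30) ≠ (i : ZMod 30)}, X j := by
  ext z
  obtain rfl | hz := eq_or_ne z 0
  · simp +decide [zero_mem_X_add_X_iff, zero_notMem_Xc isPrimitiveRoot_three thirty_mul_141]
  obtain ⟨t, ht⟩ := exists_mem_Xc isPrimitiveRoot_three thirty_mul_141 hz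
  rw [mem_X_add_X_iff ht, mem_biUnion_Xc_iff isPrimitiveRoot_three thirty_mul_141 ht (· ≠ _)]
  push_cast
  rw [isExceptionalPair_sub_iff]
  simp +decide

theorem X_add_X_add_fifteen (i : ℤ) :
    X i + X (i + 15) = {0} ∪ ⋃ j ∈ {j : ℤ | (j : ZMod 30) ≠ (i : ZMod 30) ∧
      (j : ZMod 30) ≠ ((i + 15 : ℤ) : ZMod 30)}, X j := by
  ext z
  obtain rfl | hz := eq_or_ne z 0
  · simp [zero_mem_X_add_X_iff]
  obtain ⟨t, ht⟩ := exists_mem_Xc isPrimitiveRoot_three thirty_mul_141 hz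
  rw [mem_X_add_X_iff ht, Set.mem_union,
    mem_biUnion_Xc_iff isPrimitiveRoot_three thirty_mul_141 ht (fun a => a ≠ _ ∧ a ≠ _)]
  push_cast
  rw [isExceptionalPair_sub_iff]
  simp +decide [hz]

theorem X_add_X_of_ne {i j : ℤ} (hji : (j : ZMod 30) ≠ (i : ZMod 30))
    (hji' : (j : ZMod 30) ≠ ((i + 15 : ℤ) : ZMod 30)) : X i + X j = {0}ᶜ := by
  push_cast at hji'
  ext z
  obtain rfl | hz := eq_or_ne z 0
  · simp [zero_mem_X_add_X_iff, sub_eq_iff_eq_add', hji']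
  obtain ⟨t, ht⟩ := exists_mem_Xc isPrimitiveRoot_three thirty_mul_141 hz
  rw [mem_X_add_X_iff ht]
  push_cast
  simp [isExceptionalPair_sub_iff, hz, hji, hji']

end Order30

/-- The cosets of the index-30 subgroup of `𝔽_4231ˣ` form a 15-color Directed
Ramsey algebra. -/
theorem stmt_14 : ∃ g : ZMod 4231, IsPrimitiveRoot g 4230 ∧
    (∀ i : ℤ, Xc 4231 30 g i + Xc 4231 30 g i =
      ⋃ j ∈ {j : ℤ | (j : ZMod 30) ≠ (i : ZMod 30)}, Xc 4231 30 g j) ∧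
    (∀ i : ℤ, Xc 4231 30 g i + Xc 4231 30 g (i + 15) =
      {(0 : ZMod 4231)} ∪ ⋃ j ∈ {j : ℤ | (j : ZMod 30) ≠ (i : ZMod 30) ∧
        (j : ZMod 30) ≠ ((i + 15 : ℤ) : ZMod 30)}, Xc 4231 30 g j) ∧
    (∀ i j : ℤ, (j : ZMod 30) ≠ (i : ZMod 30) → (j : ZMod 30) ≠ ((i + 15 : ℤ) : ZMod 30) →
      Xc 4231 30 g i + Xc 4231 30 g j = {(0 : ZMod 4231)}ᶜ) :=
  ⟨3, isPrimitiveRoot_three, X_add_X_self, X_add_X_add_fifteen, fun _ _ => X_add_X_of_ne⟩
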